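/- For every real m×n matrix A, herwdisc(A, 2) ≤ 2 · herdisc(A, 2). -/

import Mathlib

/-!
Lovász–Spencer–Vesztergombi rounding. A floating coloring whose entries are multiples of
`2⁻ᴷ` is rounded one binary digit at a time: the columns with an odd last digit are split
by a two-coloring of that column set, which moves them up or down by `2⁻ᴷ` at a cost of at
most `2⁻ᴷ · 2 herdisc` per row. Summing the geometric series, every dyadic constant coloring
`z · 1` of a column subset is within `2 herdisc` of a `{0, 1}`-coloring. A general `z` is
approximated by dyadic numbers, and `wdisc` is Lipschitz in `z`.
-/

open Finset

/-- `c`-color discrepancy of a matrix: minimum over `c`-colorings `p` of the columns of the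
maximum over colors `d` and rows `i` of `|∑_{j : p j = d} A i j - (1/c) ∑_j A i j|`. -/
noncomputable def mdisc {ι κ : Type*} [Fintype ι] [Fintype κ] (A : ι → κ → ℝ) (c : ℕ) : ℝ :=
  ⨅ p : κ → Fin c, ⨆ d : Fin c, ⨆ i : ι,
    |∑ j ∈ Finset.univ.filter (fun j => p j = d), A i j - (1 / (c : ℝ)) * ∑ j, A i j|

/-- hereditary `c`-color discrepancy: maximum of `mdisc` over all nonempty column submatrices. -/
noncomputable def mherdisc {ι : Type*} [Fintype ι] {n : ℕ} (A : ι → Fin n → ℝ) (c : ℕ) : ℝ :=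
  ⨆ J : {J : Finset (Fin n) // J.Nonempty}, mdisc (fun i (j : {x // x ∈ J.1}) => A i j.1) c

/-- `d_A(p,q) = max_i |∑_j a_{ij} (p j - q j)|` for floating colorings `p, q`. -/
noncomputable def dA {ι κ : Type*} [Fintype ι] [Fintype κ] (A : ι → κ → ℝ) (p q : κ → ℝ) : ℝ :=
  ⨆ i : ι, |∑ j, A i j * (p j - q j)|

/-- weighted discrepancy with weight `z`: min over `{0,1}`-colorings `q` of `d_A(z·1, q)`. -/
noncomputable def wdisc {ι κ : Type*} [Fintype ι] [Fintype κ] (A : ι → κ → ℝ) (z : ℝ) : ℝ :=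
  ⨅ q : κ → Bool, dA A (fun _ => z) (fun j => if q j then 1 else 0)

/-- `wdisc(A,2) = sup_{z ∈ [0,1]} wdisc(A,z)`. -/
noncomputable def wdisc2 {ι κ : Type*} [Fintype ι] [Fintype κ] (A : ι → κ → ℝ) : ℝ :=
  ⨆ z : Set.Icc (0:ℝ) 1, wdisc A z

/-- hereditary weighted discrepancy in two colors. -/
noncomputable def mherwdisc2 {ι : Type*} [Fintype ι] {n : ℕ} (A : ι → Fin n → ℝ) : ℝ :=
  ⨆ J : {J : Finset (Fin n) // J.Nonempty}, wdisc2 (fun i (j : {x // x ∈ J.1}) => A i j.1)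

section

variable {ι κ : Type*} [Fintype ι] [Fintype κ]

lemma mdisc_nonneg (A : ι → κ → ℝ) (c : ℕ) : 0 ≤ mdisc A c := by
  cases isEmpty_or_nonempty (κ → Fin c)
  · rw [mdisc, Real.iInf_of_isEmpty]
  · exact le_ciInf fun _ => Real.iSup_nonneg fun _ => Real.iSup_nonneg fun _ => abs_nonneg _

lemma mherdisc_nonneg {n : ℕ} (A : ι → Fin n → ℝ) (c : ℕ) : 0 ≤ mherdisc A c :=
  Real.iSup_nonneg fun _ => mdisc_nonneg _ _

lemma mdisc_restrict_le_mherdisc {n : ℕ} (A : ι → Fin n → ℝ) (c : ℕ) {S : Finset (Fin n)}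
    (hS : S.Nonempty) : mdisc (fun i (j : S) => A i j) c ≤ mherdisc A c :=
  le_ciSup (f := fun J : {J : Finset (Fin n) // J.Nonempty} =>
    mdisc (fun i (j : J.1) => A i j) c) (Finite.bddAbove_range _) ⟨S, hS⟩

lemma dA_nonneg (A : ι → κ → ℝ) (p q : κ → ℝ) : 0 ≤ dA A p q :=
  Real.iSup_nonneg fun _ => abs_nonneg _

lemma abs_sum_le_dA (A : ι → κ → ℝ) (p q : κ → ℝ) (i : ι) :
    |∑ j, A i j * (p j - q j)| ≤ dA A p q :=
  le_ciSup (f := fun i => |∑ j, A i j * (p j - q j)|) (Finite.bddAbove_range _) i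

lemma wdisc_le_dA (A : ι → κ → ℝ) (z : ℝ) (q : κ → Bool) :
    wdisc A z ≤ dA A (fun _ => z) (fun j => if q j then 1 else 0) :=
  ciInf_le ⟨0, by rintro _ ⟨q, rfl⟩; exact dA_nonneg _ _ _⟩ q

lemma sum_mul_sign_eq (P : κ → Prop) [DecidablePred P] (f : κ → ℝ) :
    ∑ j, f j * (if P j then 1 else -1) = 2 * (∑ j with P j, f j - 1 / 2 * ∑ j, f j) := by
  simp only [mul_ite, mul_one, mul_neg_one, Finset.sum_ite, Finset.sum_neg_distrib]
  rw [← Finset.sum_filter_add_sum_filter_not univ P f]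
  ring

/-- A two-coloring `p` is a signing `j ↦ ±1`, and the discrepancy of `p` in color `0` is half
the signed row sum. -/
lemma exists_abs_sum_mul_sign_le_two_mul_mdisc (A : ι → κ → ℝ) :
    ∃ s : κ → Bool, ∀ i, |∑ j, A i j * (if s j then 1 else -1)| ≤ 2 * mdisc A 2 := by
  obtain ⟨p, hp⟩ := exists_eq_ciInf_of_finite (f := fun p : κ → Fin 2 => ⨆ d : Fin 2, ⨆ i : ι,
    |∑ j with p j = d, A i j - (1 / ((2 : ℕ) : ℝ)) * ∑ j, A i j|)
  refine ⟨fun j => decide (p j = 0), fun i => ?_⟩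
  have hrow : |∑ j with p j = 0, A i j - (1 / ((2 : ℕ) : ℝ)) * ∑ j, A i j| ≤ mdisc A 2 := by
    rw [mdisc, ← hp]
    exact le_ciSup_of_le (Finite.bddAbove_range _) (0 : Fin 2)
      (le_ciSup (f := fun i => |∑ j with p j = 0, A i j - (1 / ((2 : ℕ) : ℝ)) * ∑ j, A i j|)
        (Finite.bddAbove_range _) i)
  simp only [decide_eq_true_eq, sum_mul_sign_eq, abs_mul, abs_two]
  push_cast at hrow
  linarith

lemma exists_abs_sum_mul_sign_le_two_mul_mherdisc {n : ℕ} (A : ι → Fin n → ℝ)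
    (S : Finset (Fin n)) :
    ∃ s : Fin n → Bool, ∀ i, |∑ j ∈ S, A i j * (if s j then 1 else -1)| ≤ 2 * mherdisc A 2 := by
  rcases S.eq_empty_or_nonempty with rfl | hS
  · exact ⟨fun _ => true, fun _ => by simpa using mherdisc_nonneg A 2⟩
  obtain ⟨s, hs⟩ := exists_abs_sum_mul_sign_le_two_mul_mdisc (fun i (j : S) => A i j)
  classical
  refine ⟨fun j => if h : j ∈ S then s ⟨j, h⟩ else true, fun i => ?_⟩
  rw [← Finset.sum_coe_sort S]
  simp only [coe_mem, dif_pos]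
  exact (hs i).trans (by linarith [mdisc_restrict_le_mherdisc A 2 hS])

lemma dA_const_le_add (A : ι → κ → ℝ) (z z' : ℝ) (q : κ → ℝ) :
    dA A (fun _ => z) q ≤ dA A (fun _ => z') q + |z - z'| * ∑ i, ∑ j, |A i j| := by
  have hR : ∀ i, ∑ j, |A i j| ≤ ∑ i, ∑ j, |A i j| := fun i =>
    Finset.single_le_sum (f := fun i => ∑ j, |A i j|)
      (fun _ _ => Finset.sum_nonneg fun _ _ => abs_nonneg _) (Finset.mem_univ i)
  refine Real.iSup_le (fun i => ?_) (add_nonneg (dA_nonneg _ _ _) (by positivity))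
  have hshift : ∑ j, A i j * (z - q j) = ∑ j, A i j * (z' - q j) + (z - z') * ∑ j, A i j := by
    rw [Finset.mul_sum, ← Finset.sum_add_distrib]
    exact Finset.sum_congr rfl fun j _ => by ring
  have hsum : |(z - z') * ∑ j, A i j| ≤ |z - z'| * ∑ i, ∑ j, |A i j| := by
    rw [abs_mul]
    exact mul_le_mul_of_nonneg_left ((Finset.abs_sum_le_sum_abs _ _).trans (hR i)) (abs_nonneg _)
  rw [hshift]
  exact (abs_add_le _ _).trans (add_le_add (abs_sum_le_dA A (fun _ => z') q i) hsum)

lemma wdisc_le_add (A : ι → κ → ℝ) (z z' : ℝ) :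
    wdisc A z ≤ wdisc A z' + |z - z'| * ∑ i, ∑ j, |A i j| := by
  obtain ⟨q, hq⟩ := exists_eq_ciInf_of_finite
    (f := fun q : κ → Bool => dA A (fun _ => z') (fun j => if q j then 1 else 0))
  rw [show wdisc A z' = _ from hq.symm]
  exact (wdisc_le_dA A z q).trans (dA_const_le_add _ _ _ _)

lemma two_mul_half_round_eq (t : ℕ) (b : Bool) :
    2 * ((if b then (t + 1) / 2 else t / 2 : ℕ) : ℝ)
      = t + if t % 2 = 1 then (if b then 1 else -1) else 0 := by
  obtain ⟨k, rfl | rfl⟩ := Nat.even_or_odd' t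
  · have h₁ : (2 * k + 1) / 2 = k := by omega
    cases b <;> simp [h₁]
  · have h₁ : (2 * k + 1) / 2 = k := by omega
    have h₂ : (2 * k + 1 + 1) / 2 = k + 1 := by omega
    cases b
    · simp [h₁, Nat.add_mod]
    · simp [h₂, Nat.add_mod]
      ring

lemma exists_bool_rounding_of_dyadic {n : ℕ} (A : ι → Fin n → ℝ) (K : ℕ) (t : Fin n → ℕ)
    (ht : ∀ j, t j ≤ 2 ^ K) :
    ∃ q : Fin n → Bool, (∀ j, t j = 0 → q j = false) ∧
      ∀ i, |∑ j, A i j * (t j - 2 ^ K * if q j then 1 else 0)|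
        ≤ 2 * mherdisc A 2 * (2 ^ K - 1) := by
  induction K generalizing t with
  | zero =>
    refine ⟨fun j => decide (t j = 1), fun j hj => by simp [hj], fun i => ?_⟩
    have hcol : ∀ j, (t j : ℝ) - (if t j = 1 then 1 else 0) = 0 := fun j => by
      rcases Nat.le_one_iff_eq_zero_or_eq_one.mp (ht j) with h | h <;> simp [h]
    simp [hcol]
  | succ K ih =>
    -- Round the odd numerators up or down along a signing `s` of the odd columns: the
    -- error at depth `K + 1` is twice the error at depth `K` plus the signed sum.
    obtain ⟨s, hs⟩ := exists_abs_sum_mul_sign_le_two_mul_mherdisc A {j | t j % 2 = 1}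
    obtain ⟨q, hq0, hq⟩ := ih (fun j => if s j then (t j + 1) / 2 else t j / 2) fun j => by
      have := ht j
      rw [pow_succ] at this
      split <;> omega
    refine ⟨q, fun j hj => hq0 j (by simp [hj]), fun i => ?_⟩
    have hsplit : ∑ j, A i j * (t j - 2 ^ (K + 1) * if q j then 1 else 0)
        = 2 * ∑ j, A i j * (((if s j then (t j + 1) / 2 else t j / 2 : ℕ) : ℝ)
            - 2 ^ K * if q j then 1 else 0)
          - ∑ j with t j % 2 = 1, A i j * (if s j then 1 else -1) := by
      rw [Finset.sum_filter, Finset.mul_sum, ← Finset.sum_sub_distrib]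
      refine Finset.sum_congr rfl fun j _ => ?_
      have := two_mul_half_round_eq (t j) (s j)
      split_ifs at this ⊢ <;> linear_combination (-A i j) * this
    rw [hsplit]
    calc _ ≤ 2 * (2 * mherdisc A 2 * (2 ^ K - 1)) + 2 * mherdisc A 2 := by
          refine (abs_sub _ _).trans (add_le_add ?_ (hs i))
          rw [abs_mul, abs_two]
          exact mul_le_mul_of_nonneg_left (hq i) zero_le_two
      _ = 2 * mherdisc A 2 * (2 ^ (K + 1) - 1) := by ring

lemma wdisc_restrict_dyadic_le {n : ℕ} (A : ι → Fin n → ℝ) (J : Finset (Fin n)) {K t : ℕ}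
    (ht : t ≤ 2 ^ K) :
    wdisc (fun i (j : J) => A i j) ((t : ℝ) / 2 ^ K) ≤ 2 * mherdisc A 2 := by
  classical
  obtain ⟨q, hq0, hq⟩ := exists_bool_rounding_of_dyadic A K (fun j => if j ∈ J then t else 0)
    fun j => by split <;> omega
  have hH := mherdisc_nonneg A 2
  have h2K : (0 : ℝ) < 2 ^ K := by positivity
  refine (wdisc_le_dA _ _ fun j : J => q j).trans (Real.iSup_le (fun i => ?_) (by positivity))
  have hrow : ∑ j : J, A i j * ((t : ℝ) / 2 ^ K - if q j then 1 else 0)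
      = (∑ j, A i j * (((if j ∈ J then t else 0 : ℕ) : ℝ) - 2 ^ K * if q j then 1 else 0))
        / 2 ^ K := by
    rw [Finset.sum_coe_sort J (fun j => A i j * ((t : ℝ) / 2 ^ K - if q j then 1 else 0)),
      Finset.sum_div, ← Finset.sum_subset (Finset.subset_univ J)]
    · refine Finset.sum_congr rfl fun j hj => ?_
      simp only [hj, if_true]
      field_simp
    · intro j _ hj
      simp [hj, hq0 j (by simp [hj])]
  rw [hrow, abs_div, abs_of_pos h2K, div_le_iff₀ h2K]
  nlinarith [hq i]

lemma exists_nat_abs_sub_div_two_pow_le {z : ℝ} (hz0 : 0 ≤ z) (hz1 : z ≤ 1) (K : ℕ) :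
    ∃ t : ℕ, t ≤ 2 ^ K ∧ |z - t / 2 ^ K| ≤ 1 / 2 ^ K := by
  have h2K : (0 : ℝ) < 2 ^ K := by positivity
  refine ⟨⌊z * 2 ^ K⌋₊, Nat.floor_le_of_le (by simpa using mul_le_of_le_one_left h2K.le hz1), ?_⟩
  have hlo := Nat.floor_le (mul_nonneg hz0 h2K.le)
  have hhi := Nat.lt_floor_add_one (z * 2 ^ K)
  rw [show z - ⌊z * 2 ^ K⌋₊ / 2 ^ K = (z * 2 ^ K - ⌊z * 2 ^ K⌋₊) / 2 ^ K by field_simp,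
    abs_div, abs_of_pos h2K]
  gcongr
  rw [abs_le]
  constructor <;> linarith

lemma wdisc_restrict_le_two_mul_mherdisc {n : ℕ} (A : ι → Fin n → ℝ) (J : Finset (Fin n))
    {z : ℝ} (hz0 : 0 ≤ z) (hz1 : z ≤ 1) :
    wdisc (fun i (j : J) => A i j) z ≤ 2 * mherdisc A 2 := by
  refine le_of_forall_pos_le_add fun δ hδ => ?_
  set R := ∑ i, ∑ j : J, |A i j|
  obtain ⟨K, hK⟩ := pow_unbounded_of_one_lt (R / δ) one_lt_two
  obtain ⟨t, ht, hzt⟩ := exists_nat_abs_sub_div_two_pow_le hz0 hz1 K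
  calc wdisc (fun i (j : J) => A i j) z
      ≤ wdisc (fun i (j : J) => A i j) (t / 2 ^ K) + |z - t / 2 ^ K| * R := wdisc_le_add _ _ _
    _ ≤ 2 * mherdisc A 2 + δ := by
      gcongr
      · exact wdisc_restrict_dyadic_le A J ht
      · calc |z - t / 2 ^ K| * R ≤ 1 / 2 ^ K * R := by gcongr
          _ ≤ δ := by
            rw [one_div_mul_eq_div, div_le_iff₀ (by positivity)]
            rw [div_lt_iff₀ hδ] at hK
            linarith

end

theorem herwdisc_le_two_mul_herdisc_general {m n : ℕ} (A : Fin m → Fin n → ℝ) :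
    mherwdisc2 A ≤ 2 * mherdisc A 2 := by
  have hH : 0 ≤ 2 * mherdisc A 2 := mul_nonneg zero_le_two (mherdisc_nonneg A 2)
  exact Real.iSup_le (fun J => Real.iSup_le (fun z =>
    wdisc_restrict_le_two_mul_mherdisc A J.1 z.2.1 z.2.2) hH) hH

/-- For every real m×n matrix A, herwdisc(A, 2) ≤ 2 · herdisc(A, 2). -/
theorem herwdisc_le_two_mul_herdisc {m n : ℕ} (hm : 0 < m) (hn : 0 < n)
    (A : Fin m → Fin n → ℝ) :
    mherwdisc2 A ≤ 2 * mherdisc A 2 :=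
  herwdisc_le_two_mul_herdisc_general A
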